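/- (Vague convergence of linear functionals) Let X_t be ℝ_+^d-valued random vectors and ν a Radon measure on ℝ_+^d \ {0} such that t·P(X_t ∈ A) → ν(A) for all Borel A bounded away from 0 with ν(∂A) = 0. Let θ_t → θ in ℝ_+^d \ {0}, and suppose ν({z : θᵀz = u}) = 0. Then t·P(θ_tᵀ X_t ≥ u) → ν({z : θᵀz ≥ u}) for every u > 0. -/

import Mathlib

/-!
Write `ℓₜ z = θₜᵀz` and `ℓ z = θᵀz`. On the ball of radius `R` the functional `ℓₜ` is within
`‖ℓₜ - ℓ‖ R` of `ℓ`, so for `a < u < b` and large `t` the event `{ℓₜ(Xₜ) ≥ u}` lies between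
`{ℓ(Xₜ) ≥ b}` and `{ℓ(Xₜ) ≥ a}` up to the event `{‖Xₜ‖ ≥ R}`. These three sets are bounded away
from `0`, and since `ν` is σ-finite off the origin only countably many levels `a`, `b`, `R` fail
to give `ν`-continuity sets, so vague convergence applies to them. Letting `a, b → u` (using
`ν {ℓ = u} = 0`) and `R → ∞` closes the sandwich.
-/

open MeasureTheory Filter Set Topology

section Distribution

variable {α : Type*} [MeasurableSpace α] {ν : Measure α} {g : α → ℝ}

theorem tendsto_measure_setOf_le_nhds (hg : Measurable g) {a u : ℝ} (hau : a < u)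
    (hfin : ν {x | a ≤ g x} ≠ ⊤) (hnull : ν {x | g x = u} = 0) :
    Tendsto (fun c => ν {x | c ≤ g x}) (𝓝 u) (𝓝 (ν {x | u ≤ g x})) := by
  refine tendsto_measure_of_ae_tendsto_indicator _ (measurableSet_le measurable_const hg)
    (fun c => measurableSet_le measurable_const hg) (measurableSet_le measurable_const hg) hfin
    ?_ ?_
  · filter_upwards [eventually_gt_nhds hau] with c hc x hx using hc.le.trans hx
  · filter_upwards [measure_eq_zero_iff_ae_notMem.1 hnull] with x hx
    rcases lt_or_gt_of_ne hx with h | h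
    · filter_upwards [eventually_gt_nhds h] with c hc
      exact iff_of_false hc.not_ge h.not_ge
    · filter_upwards [eventually_lt_nhds h] with c hc
      exact iff_of_true hc.le h.le

theorem tendsto_measure_setOf_le_atTop (hg : Measurable g) {a : ℝ}
    (hfin : ν {x | a ≤ g x} ≠ ⊤) : Tendsto (fun c => ν {x | c ≤ g x}) atTop (𝓝 0) := by
  rw [← measure_empty (μ := ν)]
  refine tendsto_measure_of_ae_tendsto_indicator _ MeasurableSet.empty
    (fun c => measurableSet_le measurable_const hg) (measurableSet_le measurable_const hg) hfin
    ?_ (ae_of_all _ fun x => ?_)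
  · filter_upwards [eventually_ge_atTop a] with c hc x hx using hc.trans hx
  · filter_upwards [eventually_gt_atTop (g x)] with c hc
    exact iff_of_false hc.not_ge (notMem_empty x)

end Distribution

theorem tendsto_of_forall_sandwich {ι : Type*} {l : Filter ι} {F : ι → ℝ} {L : ℝ}
    (h : ∀ ε > 0, ∃ (lo hi : ι → ℝ) (a b : ℝ), Tendsto lo l (𝓝 a) ∧ Tendsto hi l (𝓝 b) ∧
      L - ε < a ∧ b < L + ε ∧ ∀ᶠ i in l, lo i ≤ F i ∧ F i ≤ hi i) :
    Tendsto F l (𝓝 L) := by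
  refine tendsto_order.2 ⟨fun c hc => ?_, fun c hc => ?_⟩
  · obtain ⟨lo, _, a, _, hlo, _, ha, _, hF⟩ := h (L - c) (sub_pos.2 hc)
    filter_upwards [hlo.eventually_const_lt (show c < a by linarith), hF] with i hi hFi
    exact hi.trans_le hFi.1
  · obtain ⟨_, hi, _, b, _, hhi, _, hb, hF⟩ := h (c - L) (sub_pos.2 hc)
    filter_upwards [hhi.eventually_lt_const (show b < c by linarith), hF] with i hi hFi
    exact hFi.2.trans_lt hi

section NormedGroup

variable {Ω E : Type*} [MeasurableSpace Ω] [NormedAddCommGroup E]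

section LevelSets

variable [MeasurableSpace E] [OpensMeasurableSpace E] {ν : Measure E}

theorem sigmaFinite_restrict_compl_zero (hν : ∀ r : ℝ, 0 < r → ν {x | r ≤ ‖x‖} < ⊤) :
    SigmaFinite (ν.restrict {0}ᶜ) := by
  refine Measure.sigmaFinite_of_countable
    (S := insert {0} (range fun n : ℕ => {x : E | 1 / (n + 1 : ℝ) ≤ ‖x‖}))
    ((countable_range _).insert _) ?_ ?_
  · rintro s (rfl | ⟨n, rfl⟩)
    · rw [Measure.restrict_apply' isClosed_singleton.measurableSet.compl]
      simp
    · exact (Measure.restrict_apply_le _ _).trans_lt (hν _ Nat.one_div_pos_of_nat)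
  · refine eq_univ_of_forall fun x => ?_
    rcases eq_or_ne x 0 with rfl | hx
    · exact mem_sUnion_of_mem (mem_singleton 0) (mem_insert _ _)
    · obtain ⟨n, hn⟩ := exists_nat_one_div_lt (norm_pos_iff.2 hx)
      exact mem_sUnion_of_mem (t := {x : E | 1 / (n + 1 : ℝ) ≤ ‖x‖}) hn.le
        (mem_insert_of_mem _ ⟨n, rfl⟩)

theorem countable_setOf_measure_level_pos (hν : ∀ r : ℝ, 0 < r → ν {x | r ≤ ‖x‖} < ⊤)
    {g : E → ℝ} (hg : Measurable g) : {c | c ≠ g 0 ∧ 0 < ν {x | g x = c}}.Countable := by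
  have := sigmaFinite_restrict_compl_zero hν
  refine (Measure.countable_meas_level_set_pos (μ := ν.restrict {0}ᶜ) hg).mono ?_
  rintro c ⟨hc, hpos⟩
  rwa [mem_ofPred_eq, Measure.restrict_eq_self]
  rintro x hx rfl
  exact hc hx.symm

theorem exists_mem_Ioo_measure_level_eq_zero (hν : ∀ r : ℝ, 0 < r → ν {x | r ≤ ‖x‖} < ⊤)
    {g : E → ℝ} (hg : Measurable g) {l r : ℝ} (hlr : l < r) :
    ∃ c ∈ Ioo l r, ν {x | g x = c} = 0 := by
  have hdense := ((countable_setOf_measure_level_pos hν hg).insert (g 0)).dense_compl ℝ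
  obtain ⟨c, hgood, hc⟩ := hdense.exists_mem_open isOpen_Ioo (nonempty_Ioo.2 hlr)
  refine ⟨c, hc, ?_⟩
  simp only [mem_compl_iff, mem_insert_iff, mem_ofPred_eq, not_or, not_and, not_lt,
    nonpos_iff_eq_zero] at hgood
  exact hgood.2 hgood.1

end LevelSets

theorem mul_measure_toReal_le_add_of_subset_union {μ : Measure Ω} [IsFiniteMeasure μ] {t : ℝ}
    (ht : 0 ≤ t) {s s₁ s₂ : Set Ω} (h : s ⊆ s₁ ∪ s₂) :
    t * (μ s).toReal ≤ t * (μ s₁).toReal + t * (μ s₂).toReal := by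
  rw [← mul_add]
  exact mul_le_mul_of_nonneg_left ((measureReal_mono h).trans (measureReal_union_le _ _)) ht

section Dual

variable [NormedSpace ℝ E]

theorem ContinuousLinearMap.div_opNorm_add_one_le_norm (ℓ : E →L[ℝ] ℝ) {c : ℝ} {x : E}
    (h : c ≤ ℓ x) : c / (‖ℓ‖ + 1) ≤ ‖x‖ := by
  rw [div_le_iff₀ (by positivity)]
  calc c ≤ ‖ℓ x‖ := h.trans (le_abs_self _)
    _ ≤ ‖ℓ‖ * ‖x‖ := ℓ.le_opNorm x
    _ ≤ ‖x‖ * (‖ℓ‖ + 1) := by nlinarith [norm_nonneg x]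

theorem ContinuousLinearMap.setOf_le_subset_union {ℓ ℓ' : E →L[ℝ] ℝ} {a u R : ℝ}
    (h : ‖ℓ' - ℓ‖ * R ≤ u - a) : {x | u ≤ ℓ' x} ⊆ {x | a ≤ ℓ x} ∪ {x | R ≤ ‖x‖} := by
  intro x hx
  refine (le_or_gt R ‖x‖).symm.imp (fun hR => ?_) id
  have hdiff : ℓ' x - ℓ x ≤ ‖ℓ' - ℓ‖ * R :=
    calc ℓ' x - ℓ x ≤ ‖(ℓ' - ℓ) x‖ := le_abs_self _
      _ ≤ ‖ℓ' - ℓ‖ * ‖x‖ := (ℓ' - ℓ).le_opNorm x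
      _ ≤ ‖ℓ' - ℓ‖ * R := by gcongr
  change u ≤ ℓ' x at hx
  change a ≤ ℓ x
  linarith

theorem eventually_mul_measure_toReal_sandwich {μ : Measure Ω} [IsFiniteMeasure μ]
    (X : ℝ → Ω → E) {ℓ : ℝ → E →L[ℝ] ℝ} {ℓ₀ : E →L[ℝ] ℝ} (hℓ : Tendsto ℓ atTop (𝓝 ℓ₀))
    {a u b : ℝ} (ha : a < u) (hb : u < b) (R : ℝ) :
    ∀ᶠ t in atTop,
      t * (μ {ω | b ≤ ℓ₀ (X t ω)}).toReal - t * (μ {ω | R ≤ ‖X t ω‖}).toReal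
          ≤ t * (μ {ω | u ≤ ℓ t (X t ω)}).toReal ∧
        t * (μ {ω | u ≤ ℓ t (X t ω)}).toReal
          ≤ t * (μ {ω | a ≤ ℓ₀ (X t ω)}).toReal + t * (μ {ω | R ≤ ‖X t ω‖}).toReal := by
  have hsmall : Tendsto (fun t => ‖ℓ t - ℓ₀‖ * R) atTop (𝓝 0) := by
    simpa using (tendsto_iff_norm_sub_tendsto_zero.1 hℓ).mul_const R
  filter_upwards [eventually_ge_atTop 0,
    hsmall.eventually_lt_const (lt_min (sub_pos.2 ha) (sub_pos.2 hb))] with t ht hclose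
  constructor
  · refine sub_le_iff_le_add.2 (mul_measure_toReal_le_add_of_subset_union ht fun ω hω =>
      ContinuousLinearMap.setOf_le_subset_union (ℓ := ℓ t) ?_ hω)
    rw [norm_sub_rev]
    exact hclose.le.trans (min_le_right _ _)
  · exact mul_measure_toReal_le_add_of_subset_union ht fun ω hω =>
      ContinuousLinearMap.setOf_le_subset_union (hclose.le.trans (min_le_left _ _)) hω

end Dual

variable [MeasurableSpace E]

/-- `t • P(X t ∈ ·)` converges vaguely to `ν` on `E ∖ {0}`. -/
def TendstoVaguely (μ : Measure Ω) (X : ℝ → Ω → E) (ν : Measure E) : Prop :=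
  ∀ A : Set E, MeasurableSet A → (∃ r > (0:ℝ), ∀ x ∈ A, r ≤ ‖x‖) → ν (frontier A) = 0 →
    Tendsto (fun t => t * (μ {ω | X t ω ∈ A}).toReal) atTop (𝓝 (ν A).toReal)

theorem TendstoVaguely.tendsto_setOf_le [OpensMeasurableSpace E] {μ : Measure Ω}
    {X : ℝ → Ω → E} {ν : Measure E} (hX : TendstoVaguely μ X ν) {g : E → ℝ} (hg : Continuous g)
    {c r : ℝ} (hr : 0 < r) (haway : ∀ x, c ≤ g x → r ≤ ‖x‖) (hnull : ν {x | g x = c} = 0) :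
    Tendsto (fun t => t * (μ {ω | c ≤ g (X t ω)}).toReal) atTop
      (𝓝 (ν {x | c ≤ g x}).toReal) :=
  hX _ (measurableSet_le measurable_const hg.measurable) ⟨r, hr, haway⟩ <|
    measure_mono_null (fun _ hx => (frontier_le_subset_eq continuous_const hg hx).symm) hnull

variable [NormedSpace ℝ E]

theorem measure_setOf_le_apply_lt_top {ν : Measure E}
    (hν : ∀ r : ℝ, 0 < r → ν {x | r ≤ ‖x‖} < ⊤) (ℓ : E →L[ℝ] ℝ) {c : ℝ} (hc : 0 < c) :
    ν {x | c ≤ ℓ x} < ⊤ :=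
  (measure_mono fun _ => ℓ.div_opNorm_add_one_le_norm).trans_lt (hν _ (by positivity))

theorem TendstoVaguely.tendsto_setOf_le_apply [OpensMeasurableSpace E] {μ : Measure Ω}
    {X : ℝ → Ω → E} {ν : Measure E} (hX : TendstoVaguely μ X ν) (ℓ : E →L[ℝ] ℝ) {c : ℝ}
    (hc : 0 < c) (hnull : ν {x | ℓ x = c} = 0) :
    Tendsto (fun t => t * (μ {ω | c ≤ ℓ (X t ω)}).toReal) atTop
      (𝓝 (ν {x | c ≤ ℓ x}).toReal) :=
  hX.tendsto_setOf_le ℓ.continuous (by positivity) (fun _ => ℓ.div_opNorm_add_one_le_norm) hnull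

theorem TendstoVaguely.tendsto_mul_measure_toReal_setOf_le_apply [OpensMeasurableSpace E]
    {μ : Measure Ω} [IsFiniteMeasure μ] {X : ℝ → Ω → E} {ν : Measure E}
    (hν : ∀ r : ℝ, 0 < r → ν {x | r ≤ ‖x‖} < ⊤) (hX : TendstoVaguely μ X ν)
    {ℓ : ℝ → E →L[ℝ] ℝ} {ℓ₀ : E →L[ℝ] ℝ} (hℓ : Tendsto ℓ atTop (𝓝 ℓ₀)) {u : ℝ} (hu : 0 < u)
    (hnull : ν {x | ℓ₀ x = u} = 0) :
    Tendsto (fun t => t * (μ {ω | u ≤ ℓ t (X t ω)}).toReal) atTop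
      (𝓝 (ν {x | u ≤ ℓ₀ x}).toReal) := by
  set L := (ν {x | u ≤ ℓ₀ x}).toReal
  have hfin : ∀ c > 0, ν {x | c ≤ ℓ₀ x} ≠ ⊤ := fun c hc =>
    (measure_setOf_le_apply_lt_top hν ℓ₀ hc).ne
  have hcont : Tendsto (fun c => (ν {x | c ≤ ℓ₀ x}).toReal) (𝓝 u) (𝓝 L) :=
    (ENNReal.tendsto_toReal (hfin u hu)).comp <| tendsto_measure_setOf_le_nhds
      ℓ₀.continuous.measurable (half_lt_self hu) (hfin _ (half_pos hu)) hnull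
  have htail : Tendsto (fun R => (ν {x | R ≤ ‖x‖}).toReal) atTop (𝓝 0) :=
    (ENNReal.tendsto_toReal ENNReal.zero_ne_top).comp <|
      tendsto_measure_setOf_le_atTop continuous_norm.measurable (hν 1 one_pos).ne
  refine tendsto_of_forall_sandwich fun ε hε => ?_
  obtain ⟨l, r, ⟨hlu, hur⟩, hnear⟩ := mem_nhds_iff_exists_Ioo_subset.1
    ((Metric.tendsto_nhds.1 hcont (ε / 3) (by positivity)).and (eventually_gt_nhds hu))
  obtain ⟨a, ⟨hla, hau⟩, ha⟩ := exists_mem_Ioo_measure_level_eq_zero hν ℓ₀.continuous.measurable hlu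
  obtain ⟨b, ⟨hub, hbr⟩, hb⟩ := exists_mem_Ioo_measure_level_eq_zero hν ℓ₀.continuous.measurable hur
  obtain ⟨haL, ha0⟩ := hnear ⟨hla, hau.trans hur⟩
  obtain ⟨hbL, hb0⟩ := hnear ⟨hlu.trans hub, hbr⟩
  obtain ⟨R₀, hR₀⟩ := eventually_atTop.1
    ((htail.eventually (gt_mem_nhds (by positivity : (0 : ℝ) < ε / 3))).and (eventually_gt_atTop 0))
  obtain ⟨R, ⟨hR₀R, -⟩, hR⟩ :=
    exists_mem_Ioo_measure_level_eq_zero hν continuous_norm.measurable (lt_add_one R₀)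
  obtain ⟨hRsmall, hR0⟩ := hR₀ R hR₀R.le
  have htendstoR := hX.tendsto_setOf_le continuous_norm hR0 (fun _ => id) hR
  refine ⟨_, _, _, _, (hX.tendsto_setOf_le_apply ℓ₀ hb0 hb).sub htendstoR,
    (hX.tendsto_setOf_le_apply ℓ₀ ha0 ha).add htendstoR, ?_, ?_,
    eventually_mul_measure_toReal_sandwich X hℓ hau hub R⟩
  · rw [Real.dist_eq, abs_lt] at hbL
    linarith
  · rw [Real.dist_eq, abs_lt] at haL
    linarith

end NormedGroup

section DotProduct

variable {ι : Type*} [Fintype ι]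

def dotProductCLM (θ : ι → ℝ) : (ι → ℝ) →L[ℝ] ℝ :=
  ∑ i, θ i • ContinuousLinearMap.proj i

theorem dotProductCLM_apply (θ z : ι → ℝ) : dotProductCLM θ z = ∑ i, θ i * z i := by
  simp [dotProductCLM]

theorem continuous_dotProductCLM : Continuous (dotProductCLM (ι := ι)) :=
  continuous_finsetSum _ fun i _ => (continuous_apply i).smul continuous_const

end DotProduct

theorem vague_convergence_linear_general
    {Ω : Type*} [MeasurableSpace Ω] (μ : Measure Ω) [IsProbabilityMeasure μ]
    (d : ℕ) (X : ℝ → Ω → Fin d → ℝ)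
    (ν : Measure (Fin d → ℝ))
    (hRadon : ∀ r : ℝ, 0 < r → ν {x | r ≤ ‖x‖} < ⊤)
    (hvague : ∀ A : Set (Fin d → ℝ), MeasurableSet A →
      (∃ r > (0:ℝ), ∀ x ∈ A, r ≤ ‖x‖) → ν (frontier A) = 0 →
      Tendsto (fun t => t * (μ {ω | X t ω ∈ A}).toReal) atTop
        (nhds (ν A).toReal))
    (θt : ℝ → Fin d → ℝ) (θ : Fin d → ℝ)
    (hθt : Tendsto θt atTop (nhds θ))
    (u : ℝ) (hu : 0 < u)
    (hnull : ν {z | ∑ i, θ i * z i = u} = 0) :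
    Tendsto (fun t => t * (μ {ω | ∑ i, θt t i * X t ω i ≥ u}).toReal) atTop
      (nhds (ν {z | ∑ i, θ i * z i ≥ u}).toReal) := by
  have hℓ : Tendsto (fun t => dotProductCLM (θt t)) atTop (𝓝 (dotProductCLM θ)) :=
    (continuous_dotProductCLM.tendsto θ).comp hθt
  simpa only [dotProductCLM_apply, ge_iff_le] using
    TendstoVaguely.tendsto_mul_measure_toReal_setOf_le_apply (X := X) hRadon hvague hℓ hu
      (by simpa only [dotProductCLM_apply] using hnull)

/-- Vague convergence of linear functionals: if t·P(X_t ∈ A) → ν(A) for all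
Borel sets A bounded away from 0 with ν(∂A) = 0, ν is finite on sets bounded
away from 0, θ_t → θ ≠ 0 (nonnegative), and ν({θᵀz = u}) = 0, then
t·P(θ_tᵀX_t ≥ u) → ν({θᵀz ≥ u}) for every u > 0. -/
theorem vague_convergence_linear
    {Ω : Type*} [MeasurableSpace Ω] (μ : Measure Ω) [IsProbabilityMeasure μ]
    (d : ℕ) (X : ℝ → Ω → Fin d → ℝ) (hXm : ∀ t, Measurable (X t))
    (hXpos : ∀ t ω i, 0 ≤ X t ω i)
    (ν : Measure (Fin d → ℝ))
    (hRadon : ∀ r : ℝ, 0 < r → ν {x | r ≤ ‖x‖} < ⊤)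
    (hvague : ∀ A : Set (Fin d → ℝ), MeasurableSet A →
      (∃ r > (0:ℝ), ∀ x ∈ A, r ≤ ‖x‖) → ν (frontier A) = 0 →
      Tendsto (fun t => t * (μ {ω | X t ω ∈ A}).toReal) atTop
        (nhds (ν A).toReal))
    (θt : ℝ → Fin d → ℝ) (θ : Fin d → ℝ)
    (hθt : Tendsto θt atTop (nhds θ))
    (hθ : ∀ i, 0 ≤ θ i) (hθne : θ ≠ 0)
    (u : ℝ) (hu : 0 < u)
    (hnull : ν {z | ∑ i, θ i * z i = u} = 0) :
    Tendsto (fun t => t * (μ {ω | ∑ i, θt t i * X t ω i ≥ u}).toReal) atTop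
      (nhds (ν {z | ∑ i, θ i * z i ≥ u}).toReal) :=
  vague_convergence_linear_general μ d X ν hRadon hvague θt θ hθt u hu hnull
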